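/- Let p > q be primes with p ≡ 1 (mod q) and g of order q mod p. For each γ with 1 < γ ≤ q, define on A = ℤ_p × ℤ_q the operations (n,m) + (s,t) = (n + g^m s, m+t) and (n,m) ∘ (s,t) = (n + g^{γm} s, m+t). Then each A_γ = (A,+,∘) is a bi-skew brace with additive group ℤ_p ⋊_g ℤ_q and |ker λ| = p, and the braces A_γ for distinct values of γ (mod q) are pairwise non-isomorphic, giving exactly q-1 isomorphism classes. -/

import Mathlib

/-- `(op, e, inv)` is a group structure on `A`. -/
def IsGroupOp {A : Type*} (op : A → A → A) (e : A) (inv : A → A) : Prop :=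
  (∀ a b c, op (op a b) c = op a (op b c)) ∧ (∀ a, op e a = a) ∧ (∀ a, op a e = a) ∧
  (∀ a, op (inv a) a = e) ∧ (∀ a, op a (inv a) = e)

/-- `(A, add, mul)` is a skew left brace: both operations are group operations and
`a ∘ (b + c) = (a ∘ b - a) + a ∘ c`. -/
def IsSkewBrace {A : Type*} (add : A → A → A) (zero : A) (neg : A → A)
    (mul : A → A → A) (one : A) (inv : A → A) : Prop :=
  IsGroupOp add zero neg ∧ IsGroupOp mul one inv ∧
  ∀ a b c, mul a (add b c) = add (add (mul a b) (neg a)) (mul a c)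

section

variable (p q : ℕ) (g : ZMod p)

/-- The addition `(n,m) + (s,t) = (n + g^m s, m+t)` of `M = ℤ_p ⋊_g ℤ_q`. -/
def mAdd (x y : ZMod p × ZMod q) : ZMod p × ZMod q :=
  (x.1 + g ^ x.2.val * y.1, x.2 + y.2)

/-- The negation of `M = ℤ_p ⋊_g ℤ_q`. -/
def mNeg (x : ZMod p × ZMod q) : ZMod p × ZMod q :=
  (-(g ^ (q - x.2.val) * x.1), -x.2)

/-- The circle operation `(n,m) ∘ (s,t) = (n + g^{γm} s, m+t)` of `A_γ`. -/
def gMul (γ : ℕ) (x y : ZMod p × ZMod q) : ZMod p × ZMod q :=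
  (x.1 + g ^ (γ * x.2.val) * y.1, x.2 + y.2)

/-- The inverse for the circle operation of `A_γ`. -/
def gInv (γ : ℕ) (x : ZMod p × ZMod q) : ZMod p × ZMod q :=
  (-(g ^ (γ * (q - x.2.val)) * x.1), -x.2)

end


/-!
Write `M = ℤ_p ⋊_g ℤ_q` additively. An additive automorphism of `M` fixes `ℤ_p × 0` (there is
no nonzero additive map `ℤ_p → ℤ_q`), acts on it by some `α ≠ 0`, and the relation
`(0,1) + (n,0) = (g n,0) + (0,1)` forces it to be the identity on the quotient `ℤ_q`; what is
left is a `g`-cocycle `ℤ_q → ℤ_p`, which is a coboundary. Hence every automorphism is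
`(n,m) ↦ (α n + (g^m - 1) w, m)`. Evaluating an isomorphism `A_γ ≅ A_γ'` on
`(0,1) ∘ (1,0)` then gives `g^γ = g^γ'`.

Conversely, in a skew brace on `M` the kernel of `λ` is an additive subgroup; of order `p` it
must be `ℤ_p × 0`, so `λ` factors through `ℤ_q`. Writing `λ_{(0,m)} = (α m, w m)` in the above
form, `α` is a character `ℤ_q → ℤ_p^×` and `w` an `α`-cocycle. The character is nontrivial
(else `w` would be additive `ℤ_q → ℤ_p`, hence zero, and `λ` trivial), so `α m = g^{i m}` with
`0 < i < q` and `w = (α - 1) v` is a coboundary; the shear `(n,m) ↦ (n + (g^m - 1) v, m)` then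
carries the brace onto `A_{i+1}`.
-/

namespace IsGroupOp

variable {G H : Type*} {op : G → G → G} {e : G} {inv : G → G}

theorem inv_op_cancel_left (h : IsGroupOp op e inv) (a x : G) : op (inv a) (op a x) = x := by
  rw [← h.1, h.2.2.2.1, h.2.1]

theorem op_inv_cancel_left (h : IsGroupOp op e inv) (a x : G) : op a (op (inv a) x) = x := by
  rw [← h.1, h.2.2.2.2, h.2.1]

theorem left_cancel (h : IsGroupOp op e inv) {a x y : G} (hxy : op a x = op a y) : x = y := by
  simpa only [h.inv_op_cancel_left] using congrArg (op (inv a)) hxy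

theorem right_cancel (h : IsGroupOp op e inv) {a x y : G} (hxy : op x a = op y a) : x = y := by
  simpa only [h.1, h.2.2.2.2, h.2.2.1] using congrArg (op · (inv a)) hxy

theorem eq_inv_of_op_eq (h : IsGroupOp op e inv) {x y : G} (hxy : op x y = e) : y = inv x :=
  h.left_cancel (hxy.trans (h.2.2.2.2 x).symm)

theorem map_unit {opH : H → H → H} {eH : H} {invH : H → H} (hG : IsGroupOp op e inv)
    (hH : IsGroupOp opH eH invH) {f : G → H} (hf : ∀ a b, f (op a b) = opH (f a) (f b)) :
    f e = eH :=
  hH.right_cancel (a := f e) (by rw [← hf, hG.2.1, hH.2.1])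

theorem map_inv {opH : H → H → H} {eH : H} {invH : H → H} (hG : IsGroupOp op e inv)
    (hH : IsGroupOp opH eH invH) {f : G → H} (hf : ∀ a b, f (op a b) = opH (f a) (f b))
    (a : G) : f (inv a) = invH (f a) :=
  hH.eq_inv_of_op_eq (by rw [← hf, hG.2.2.2.2, hG.map_unit hH hf])

end IsGroupOp

def braceLambda {A : Type*} (add : A → A → A) (neg : A → A) (mul : A → A → A) (a b : A) : A :=
  add (neg a) (mul a b)

def braceKer {A : Type*} (add mul : A → A → A) : Set A :=
  {a | ∀ b, mul a b = add a b}

theorem card_braceKer_transfer {A B : Type*} {add mul : A → A → A} {addB : B → B → B}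
    (e : A ≃ B) (he : ∀ a b, e (add a b) = addB (e a) (e b)) :
    Nat.card (braceKer addB fun x y => e (mul (e.symm x) (e.symm y))) =
      Nat.card (braceKer add mul) := by
  refine (Nat.card_congr (e.subtypeEquiv fun a => ?_)).symm
  show (∀ b, mul a b = add a b) ↔ ∀ y, e (mul (e.symm (e a)) (e.symm y)) = addB (e a) y
  rw [← e.forall_congr_right]
  simp only [e.symm_apply_apply, ← he, e.apply_eq_iff_eq]

namespace IsSkewBrace

variable {A B : Type*} {add : A → A → A} {zero : A} {neg : A → A} {mul : A → A → A} {one : A}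
  {inv : A → A}

theorem mul_zero (h : IsSkewBrace add zero neg mul one inv) (a : A) : mul a zero = a := by
  have hdist : add (add (mul a zero) (neg a)) (mul a zero) = add zero (mul a zero) := by
    rw [← h.2.2, h.1.2.1 zero, h.1.2.1]
  exact h.1.right_cancel ((h.1.right_cancel hdist).trans (h.1.2.2.2.2 a).symm)

theorem one_eq_zero (h : IsSkewBrace add zero neg mul one inv) : one = zero := by
  simpa only [h.2.1.2.1] using (h.mul_zero one).symm

theorem transfer {addB : B → B → B} {zeroB : B} {negB : B → B}
    (h : IsSkewBrace add zero neg mul one inv) (hB : IsGroupOp addB zeroB negB) (e : A ≃ B)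
    (he : ∀ a b, e (add a b) = addB (e a) (e b)) :
    IsSkewBrace addB zeroB negB (fun x y => e (mul (e.symm x) (e.symm y))) zeroB
      (fun x => e (inv (e.symm x))) := by
  have hzero : e.symm zeroB = one := by
    rw [e.symm_apply_eq, h.one_eq_zero, h.1.map_unit hB he]
  have hsymm_add (x y : B) : e.symm (addB x y) = add (e.symm x) (e.symm y) := by
    rw [e.symm_apply_eq, he, e.apply_symm_apply, e.apply_symm_apply]
  obtain ⟨hassoc, hone_mul, hmul_one, hinv_mul, hmul_inv⟩ := h.2.1
  refine ⟨hB, ⟨fun a b c => ?_, fun a => ?_, fun a => ?_, fun a => ?_, fun a => ?_⟩,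
    fun a b c => ?_⟩ <;> dsimp only
  · simp only [e.symm_apply_apply, hassoc]
  · simp only [hzero, hone_mul, e.apply_symm_apply]
  · simp only [hzero, hmul_one, e.apply_symm_apply]
  · rw [e.symm_apply_apply, hinv_mul, ← hzero, e.apply_symm_apply]
  · rw [e.symm_apply_apply, hmul_inv, ← hzero, e.apply_symm_apply]
  · rw [hsymm_add, h.2.2, he, he, h.1.map_inv hB he, e.apply_symm_apply]

theorem mul_eq_add_lambda (h : IsSkewBrace add zero neg mul one inv) (a b : A) :
    mul a b = add a (braceLambda add neg mul a b) :=
  (h.1.op_inv_cancel_left a _).symm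

theorem lambda_add (h : IsSkewBrace add zero neg mul one inv) (a b c : A) :
    braceLambda add neg mul a (add b c) =
      add (braceLambda add neg mul a b) (braceLambda add neg mul a c) := by
  simp only [braceLambda, h.2.2, h.1.1]

theorem lambda_mul (h : IsSkewBrace add zero neg mul one inv) (a b c : A) :
    braceLambda add neg mul (mul a b) c =
      braceLambda add neg mul a (braceLambda add neg mul b c) := by
  refine h.1.left_cancel (a := mul a b) ?_
  calc add (mul a b) (braceLambda add neg mul (mul a b) c)
      = mul a (add b (braceLambda add neg mul b c)) := by
        rw [← h.mul_eq_add_lambda, h.2.1.1, h.mul_eq_add_lambda b c]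
    _ = add (mul a b) (braceLambda add neg mul a (braceLambda add neg mul b c)) := by
        rw [h.mul_eq_add_lambda a (add _ _), h.lambda_add, ← h.1.1, ← h.mul_eq_add_lambda]

theorem lambda_injective (h : IsSkewBrace add zero neg mul one inv) (a : A) :
    Function.Injective (braceLambda add neg mul a) := fun x y hxy =>
  h.2.1.left_cancel (by rw [h.mul_eq_add_lambda, hxy, ← h.mul_eq_add_lambda])

theorem mem_braceKer_iff (h : IsSkewBrace add zero neg mul one inv) {a : A} :
    a ∈ braceKer add mul ↔ ∀ b, braceLambda add neg mul a b = b := by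
  show (∀ b, mul a b = add a b) ↔ _
  simp only [h.mul_eq_add_lambda a]
  exact forall_congr' fun b => ⟨h.1.left_cancel, congrArg _⟩

theorem zero_mem_braceKer (h : IsSkewBrace add zero neg mul one inv) :
    zero ∈ braceKer add mul := fun b => by
  rw [← h.one_eq_zero, h.2.1.2.1, h.one_eq_zero, h.1.2.1]

theorem add_mem_braceKer (h : IsSkewBrace add zero neg mul one inv) {x y : A}
    (hx : x ∈ braceKer add mul) (hy : y ∈ braceKer add mul) : add x y ∈ braceKer add mul :=
  fun c => calc
    mul (add x y) c = mul x (mul y c) := by rw [← hx y, h.2.1.1]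
    _ = add (add x y) c := by rw [hy c, hx, h.1.1]

theorem neg_mem_braceKer (h : IsSkewBrace add zero neg mul one inv) {x : A}
    (hx : x ∈ braceKer add mul) : neg x ∈ braceKer add mul := by
  have hinv : neg x = inv x :=
    h.2.1.eq_inv_of_op_eq (by rw [hx, h.1.2.2.2.2, h.one_eq_zero])
  intro b
  calc mul (neg x) b = mul (inv x) (mul x (add (neg x) b)) := by
        rw [hx, h.1.op_inv_cancel_left, hinv]
    _ = add (neg x) b := h.2.1.inv_op_cancel_left x _

end IsSkewBrace

theorem ZMod.map_natCast_of_map_add {n : ℕ} {B : Type*} [AddGroup B] {f : ZMod n → B}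
    (hf : ∀ a b, f (a + b) = f a + f b) (k : ℕ) : f k = k • f 1 := by
  rw [← nsmul_one]
  exact map_nsmul (AddMonoidHom.mk' f hf) k 1

theorem ZMod.map_natCast_eq_pow {n : ℕ} {M : Type*} [Monoid M] {f : ZMod n → M} (h0 : f 0 = 1)
    (hf : ∀ a b, f (a + b) = f a * f b) (k : ℕ) : f k = f 1 ^ k := by
  induction k with
  | zero => simpa using h0
  | succ k ih => rw [Nat.cast_succ, hf, ih, pow_succ]

theorem ZMod.map_eq_mul_of_map_add {n : ℕ} [NeZero n] {f : ZMod n → ZMod n}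
    (hf : ∀ a b, f (a + b) = f a + f b) (x : ZMod n) : f x = f 1 * x := by
  conv_lhs => rw [← ZMod.natCast_zmod_val x]
  rw [ZMod.map_natCast_of_map_add hf, nsmul_eq_mul, ZMod.natCast_zmod_val, mul_comm]

theorem ZMod.map_eq_zero_of_map_add {n k : ℕ} [NeZero n] [Fact k.Prime] {f : ZMod n → ZMod k}
    (hf : ∀ a b, f (a + b) = f a + f b) (hn : (n : ZMod k) ≠ 0) (x : ZMod n) : f x = 0 := by
  have hn1 : (n : ZMod k) * f 1 = 0 := by
    rw [← nsmul_eq_mul, ← ZMod.map_natCast_of_map_add hf, ZMod.natCast_self]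
    simpa using hf 0 0
  rw [← ZMod.natCast_zmod_val x, ZMod.map_natCast_of_map_add hf,
    (mul_eq_zero.1 hn1).resolve_left hn, smul_zero]

theorem ZMod.natCast_ne_zero_of_prime {p q : ℕ} (hp : p.Prime) (hq : q.Prime) (hpq : p ≠ q) :
    (p : ZMod q) ≠ 0 := by
  rw [Ne, ZMod.natCast_eq_zero_iff, Nat.prime_dvd_prime_iff_eq hq hp]
  exact hpq.symm

theorem ZMod.val_natCast_sub_one (q : ℕ) {γ : ℕ} (h0 : 0 < γ) (hγ : γ ≤ q) :
    ((γ : ZMod q) - 1).val = γ - 1 := by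
  rw [← Nat.cast_one, ← Nat.cast_sub h0, ZMod.val_natCast_of_lt (by omega)]

theorem ZMod.natCast_injOn_Ioc (q : ℕ) : Set.InjOn (Nat.cast : ℕ → ZMod q) (Set.Ioc 0 q) :=
  fun γ ⟨h0, hγ⟩ γ' ⟨h0', hγ'⟩ h => by
    have := ZMod.val_natCast_sub_one q h0 hγ
    rw [h, ZMod.val_natCast_sub_one q h0' hγ'] at this
    omega

theorem exists_eq_sub_one_mul_of_cocycle {ι K : Type*} [AddCommMagma ι] [Field K]
    {a u : ι → K} {i₀ : ι} (h₀ : a i₀ ≠ 1) (hu : ∀ i j, u (i + j) = u i + a i * u j) :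
    ∃ w, ∀ i, u i = (a i - 1) * w := by
  refine ⟨u i₀ / (a i₀ - 1), fun i => ?_⟩
  have hsymm := (hu i i₀).symm.trans ((congrArg u (add_comm i i₀)).trans (hu i₀ i))
  rw [mul_div_assoc', eq_div_iff (sub_ne_zero.2 h₀)]
  linear_combination -hsymm

def mAut (p q : ℕ) (g α w : ZMod p) (x : ZMod p × ZMod q) : ZMod p × ZMod q :=
  (α * x.1 + (g ^ x.2.val - 1) * w, x.2)

def mShear (p q : ℕ) (g v : ZMod p) : (ZMod p × ZMod q) ≃ (ZMod p × ZMod q) where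
  toFun := mAut p q g 1 v
  invFun := mAut p q g 1 (-v)
  left_inv x := by simp [mAut]
  right_inv x := by simp [mAut]

section Semidirect

variable {p q : ℕ} {g : ZMod p}

local infixl:65 " +ₘ " => mAdd p q g

theorem pow_val_add [NeZero q] (hg : g ^ q = 1) (m n : ZMod q) :
    g ^ (m + n).val = g ^ m.val * g ^ n.val := by
  rw [ZMod.val_add, ← pow_eq_pow_mod _ hg, pow_add]

theorem pow_val_neg [NeZero q] (hg : g ^ q = 1) (m : ZMod q) :
    g ^ (-m).val = g ^ (q - m.val) := by
  rw [ZMod.neg_val', ← pow_eq_pow_mod _ hg]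

theorem pow_sub_val_mul_pow_val [NeZero q] (hg : g ^ q = 1) (m : ZMod q) :
    g ^ (q - m.val) * g ^ m.val = 1 := by
  rw [← pow_add, Nat.sub_add_cancel m.val_lt.le, hg]

theorem pow_eq_pow_iff_natCast_eq [NeZero q] (hg : orderOf g = q) {a b : ℕ} :
    g ^ a = g ^ b ↔ (a : ZMod q) = b := by
  rw [(orderOf_pos_iff.1 (hg ▸ NeZero.pos q)).pow_eq_pow_iff_modEq, hg,
    ZMod.natCast_eq_natCast_iff]

theorem ne_one_of_orderOf_eq [Fact (1 < q)] (hg : orderOf g = q) : g ≠ 1 := fun h =>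
  (Fact.out : 1 < q).ne' (hg ▸ orderOf_eq_one_iff.2 h)

theorem isGroupOp_mAdd [NeZero q] (hg : g ^ q = 1) : IsGroupOp (mAdd p q g) 0 (mNeg p q g) := by
  refine ⟨fun a b c => ?_, fun a => ?_, fun a => ?_, fun a => ?_, fun a => ?_⟩ <;>
    simp only [mAdd, mNeg, Prod.ext_iff, Prod.fst_zero, Prod.snd_zero, pow_val_add hg,
      pow_val_neg hg, ZMod.val_zero, pow_zero] <;>
    refine ⟨?_, by ring⟩
  all_goals first
    | ring1
    | linear_combination (-a.1) * pow_sub_val_mul_pow_val hg a.2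

theorem isSkewBrace_mAdd [NeZero q] {g₁ g₂ : ZMod p} (hg₁ : g₁ ^ q = 1) (hg₂ : g₂ ^ q = 1) :
    IsSkewBrace (mAdd p q g₁) 0 (mNeg p q g₁) (mAdd p q g₂) 0 (mNeg p q g₂) := by
  refine ⟨isGroupOp_mAdd hg₁, isGroupOp_mAdd hg₂, fun a b c => ?_⟩
  simp only [mAdd, mNeg, Prod.ext_iff, pow_val_add hg₁, pow_val_neg hg₁]
  exact ⟨by linear_combination (-(g₂ ^ a.2.val * g₁ ^ b.2.val * c.1)) *
    pow_sub_val_mul_pow_val hg₁ a.2, by ring⟩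

theorem gMul_eq_mAdd (γ : ℕ) : gMul p q g γ = mAdd p q (g ^ γ) := by
  funext x y
  simp [gMul, mAdd, pow_mul]

theorem gInv_eq_mNeg (γ : ℕ) : gInv p q g γ = mNeg p q (g ^ γ) := by
  funext x
  simp [gInv, mNeg, pow_mul]

theorem braceKer_gMul [Fact q.Prime] (hg : orderOf g = q) {γ : ℕ} (hγ : (γ : ZMod q) ≠ 1) :
    braceKer (mAdd p q g) (gMul p q g γ) = {a | a.2 = 0} := by
  ext a
  refine ⟨fun ha => ?_, fun ha b => by simp [gMul, mAdd, show a.2 = 0 from ha]⟩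
  have h1 := congrArg Prod.fst (ha (1, 0))
  simp only [gMul, mAdd, mul_one, add_right_inj] at h1
  rw [pow_eq_pow_iff_natCast_eq hg, Nat.cast_mul, ZMod.natCast_zmod_val] at h1
  exact (mul_eq_zero.1 (by linear_combination h1 : ((γ : ZMod q) - 1) * a.2 = 0)).resolve_left
    (sub_ne_zero.2 hγ)

theorem card_snd_eq_zero : Nat.card {a : ZMod p × ZMod q | a.2 = 0} = p := by
  have : {a : ZMod p × ZMod q | a.2 = 0} = Set.range (·, 0) := by
    ext ⟨n, m⟩
    simp [eq_comm]
  rw [this, Nat.card_range_of_injective (Prod.mk_left_injective _), Nat.card_zmod]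

theorem mAut_mAdd [NeZero q] (hg : g ^ q = 1) (α w : ZMod p) (x y : ZMod p × ZMod q) :
    mAut p q g α w (x +ₘ y) = mAut p q g α w x +ₘ mAut p q g α w y := by
  simp only [mAut, mAdd, pow_val_add hg, Prod.mk.injEq, and_true]
  ring

theorem mAut_comp (α w β v : ZMod p) :
    mAut p q g α w ∘ mAut p q g β v = mAut p q g (α * β) (w + α * v) := by
  funext x
  simp only [Function.comp, mAut, Prod.mk.injEq, and_true]
  ring

theorem mAut_one_zero : mAut p q g 1 0 = id := by
  funext x
  simp [mAut]

theorem mAut_inj [Fact p.Prime] [Fact (1 < q)] (hg : g ≠ 1) {α w β v : ZMod p} :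
    mAut p q g α w = mAut p q g β v ↔ α = β ∧ w = v := by
  refine ⟨fun h => ?_, by rintro ⟨rfl, rfl⟩; rfl⟩
  have h1 := congrArg Prod.fst (congrFun h (1, 0))
  have h2 := congrArg Prod.fst (congrFun h (0, 1))
  simp only [mAut, ZMod.val_zero, ZMod.val_one, pow_zero, pow_one, sub_self, zero_mul, add_zero,
    mul_one, mul_zero, zero_add] at h1 h2
  exact ⟨h1, mul_left_cancel₀ (sub_ne_zero.2 hg) h2⟩

theorem map_mk_zero [Fact p.Prime] [Fact q.Prime] (hpq : p ≠ q)
    {f : ZMod p × ZMod q → ZMod p × ZMod q} (hf : ∀ x y, f (x +ₘ y) = f x +ₘ f y)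
    (n : ZMod p) : f (n, 0) = ((f (1, 0)).1 * n, 0) := by
  have hadd (n n' : ZMod p) : f (n + n', 0) = f (n, 0) +ₘ f (n', 0) := by
    rw [← hf]
    simp [mAdd]
  have hsnd : ∀ n : ZMod p, (f (n, 0)).2 = 0 :=
    ZMod.map_eq_zero_of_map_add (f := fun n => (f (n, 0)).2) (fun n n' => by rw [hadd]; rfl)
      (ZMod.natCast_ne_zero_of_prime Fact.out Fact.out hpq)
  have hfst (n n' : ZMod p) : (f (n + n', 0)).1 = (f (n, 0)).1 + (f (n', 0)).1 := by
    simp [hadd, mAdd, hsnd]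
  exact Prod.ext (ZMod.map_eq_mul_of_map_add (f := fun n => (f (n, 0)).1) hfst n) (hsnd n)

theorem snd_map_zero_one [Fact p.Prime] [Fact (1 < q)] (hg : orderOf g = q)
    {f : ZMod p × ZMod q → ZMod p × ZMod q} (hf : ∀ x y, f (x +ₘ y) = f x +ₘ f y) {α : ZMod p}
    (hα : α ≠ 0) (hP : ∀ n, f (n, 0) = (α * n, 0)) : (f (0, 1)).2 = 1 := by
  have hcomm : (0, 1) +ₘ (1, 0) = (g, 0) +ₘ (0, 1) := by simp [mAdd, ZMod.val_one]
  have h := congrArg Prod.fst ((hf _ _).symm.trans ((congrArg f hcomm).trans (hf _ _)))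
  simp only [hP, mAdd, ZMod.val_zero, pow_zero, one_mul, mul_one] at h
  have hpow : g ^ (f (0, 1)).2.val = g ^ 1 :=
    mul_right_cancel₀ hα (by linear_combination h)
  rw [pow_eq_pow_iff_natCast_eq hg, ZMod.natCast_zmod_val, Nat.cast_one] at hpow
  exact hpow

theorem exists_eq_mAut [Fact p.Prime] [Fact q.Prime] (hpq : p ≠ q) (hg : orderOf g = q)
    {f : ZMod p × ZMod q → ZMod p × ZMod q} (hf : ∀ x y, f (x +ₘ y) = f x +ₘ f y)
    (hinj : Function.Injective f) : ∃ α w, α ≠ 0 ∧ f = mAut p q g α w := by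
  have hP := map_mk_zero hpq hf
  set α := (f (1, 0)).1
  have hα : α ≠ 0 := fun h => by
    have h10 : f (1, 0) = f (0, 0) := by rw [hP, hP, h, zero_mul, zero_mul]
    simpa using hinj h10
  have hsnd (m : ZMod q) : (f (0, m)).2 = m := by
    have hadd (m m' : ZMod q) : (f (0, m + m')).2 = (f (0, m)).2 + (f (0, m')).2 := by
      simpa [mAdd] using congrArg Prod.snd (hf (0, m) (0, m'))
    rw [ZMod.map_eq_mul_of_map_add (f := fun m => (f (0, m)).2) hadd,
      snd_map_zero_one hg hf hα hP, one_mul]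
  have hcocycle (m m' : ZMod q) :
      (f (0, m + m')).1 = (f (0, m)).1 + g ^ m.val * (f (0, m')).1 := by
    have h := congrArg Prod.fst (hf (0, m) (0, m'))
    simp only [mAdd, mul_zero, add_zero, hsnd] at h
    exact h
  obtain ⟨w, hw⟩ := exists_eq_sub_one_mul_of_cocycle (a := fun m : ZMod q => g ^ m.val)
    (u := fun m => (f (0, m)).1) (i₀ := 1)
    (by simpa [ZMod.val_one] using ne_one_of_orderOf_eq hg) hcocycle
  refine ⟨α, w, hα, funext fun x => ?_⟩
  have hx : x = (x.1, 0) +ₘ (0, x.2) := by simp [mAdd]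
  rw [hx, hf, hP]
  simp [mAut, mAdd, hsnd, hw]

theorem pow_eq_pow_of_gMul_equiv [Fact p.Prime] [Fact q.Prime] (hpq : p ≠ q)
    (hg : orderOf g = q) {γ γ' : ℕ} {e : (ZMod p × ZMod q) ≃ (ZMod p × ZMod q)}
    (hadd : ∀ a b, e (a +ₘ b) = e a +ₘ e b)
    (hmul : ∀ a b, e (gMul p q g γ a b) = gMul p q g γ' (e a) (e b)) : g ^ γ = g ^ γ' := by
  obtain ⟨α, w, hα, he⟩ := exists_eq_mAut hpq hg hadd e.injective
  have h := congrArg Prod.fst (hmul (0, 1) (1, 0))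
  simp only [he, mAut, gMul, ZMod.val_one, ZMod.val_zero, mul_one, mul_zero, pow_zero, sub_self,
    zero_mul, add_zero, zero_add] at h
  exact mul_left_cancel₀ hα (by linear_combination h)

theorem dvd_card_of_snd_ne_zero [Fact q.Prime] (hg : g ^ q = 1) {K : Set (ZMod p × ZMod q)}
    (h0 : 0 ∈ K) (hadd : ∀ x ∈ K, ∀ y ∈ K, x +ₘ y ∈ K) (hneg : ∀ x ∈ K, mNeg p q g x ∈ K)
    {x : ZMod p × ZMod q} (hxK : x ∈ K) (hx : x.2 ≠ 0) : q ∣ Nat.card K := by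
  have hG := isGroupOp_mAdd (p := p) hg
  have hmultiple (k : ℕ) : (x +ₘ ·)^[k] 0 ∈ K ∧ ((x +ₘ ·)^[k] 0).2 = k * x.2 := by
    induction k with
    | zero => exact ⟨h0, by simp⟩
    | succ k ih =>
      rw [Function.iterate_succ_apply']
      refine ⟨hadd x hxK _ ih.1, ?_⟩
      change x.2 + _ = _
      rw [ih.2]
      push_cast
      ring
  -- `c s ∈ K` lies over `s`, so `(z, s) ↦ z + c s` is a bijection `(K ∩ ℤ_p × 0) × ℤ_q ≃ K`
  let c (s : ZMod q) := (x +ₘ ·)^[(s * x.2⁻¹).val] 0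
  have hc (s : ZMod q) : c s ∈ K ∧ (c s).2 = s := by
    refine ⟨(hmultiple _).1, ?_⟩
    rw [(hmultiple _).2, ZMod.natCast_zmod_val, mul_assoc, inv_mul_cancel₀ hx, mul_one]
  let K₀ : Set (ZMod p × ZMod q) := {y | y ∈ K ∧ y.2 = 0}
  let F (z : K₀ × ZMod q) : K := ⟨z.1.1 +ₘ c z.2, hadd _ z.1.2.1 _ (hc _).1⟩
  have hF : Function.Bijective F := by
    refine ⟨fun ⟨⟨z, hz⟩, s⟩ ⟨⟨z', hz'⟩, s'⟩ h => ?_, fun ⟨y, hy⟩ => ?_⟩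
    · have h' : z +ₘ c s = z' +ₘ c s' := congrArg Subtype.val h
      obtain rfl : s = s' := by simpa [mAdd, hz.2, hz'.2, (hc _).2] using congrArg Prod.snd h'
      obtain rfl : z = z' := hG.right_cancel h'
      rfl
    · refine ⟨⟨⟨y +ₘ mNeg p q g (c y.2), hadd _ hy _ (hneg _ (hc _).1), ?_⟩, y.2⟩, ?_⟩
      · simp [mAdd, mNeg, (hc _).2]
      · exact Subtype.ext (by simp only [F, hG.1, hG.2.2.2.1, hG.2.2.1])
  rw [← Nat.card_eq_of_bijective F hF, Nat.card_prod, Nat.card_zmod]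
  exact dvd_mul_left q _

theorem exists_pow_and_coboundary [Fact p.Prime] [NeZero q] (hg : orderOf g = q)
    (hq : (q : ZMod p) ≠ 0) {A W : ZMod q → ZMod p} (hA0 : A 0 = 1)
    (hA : ∀ m m', A (m + m') = A m * A m') (hW : ∀ m m', W (m + m') = W m + A m * W m')
    (hne : A 1 ≠ 1 ∨ W 1 ≠ 0) :
    ∃ i, 0 < i ∧ i < q ∧ ∃ v, ∀ m, A m = g ^ (i * m.val) ∧ W m = (A m - 1) * v := by
  have hpow := ZMod.map_natCast_eq_pow hA0 hA
  have hA1 : A 1 ≠ 1 := fun h1 => by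
    have hA' (m : ZMod q) : A m = 1 := by rw [← ZMod.natCast_zmod_val m, hpow, h1, one_pow]
    exact hne.resolve_left (not_not.2 h1)
      (ZMod.map_eq_zero_of_map_add (fun m m' => by rw [hW, hA', one_mul]) hq 1)
  obtain ⟨i, hiq, hi⟩ := (hg ▸ IsPrimitiveRoot.orderOf g).eq_pow_of_pow_eq_one
    (by rw [← hpow, ZMod.natCast_self, hA0] : A 1 ^ q = 1)
  obtain ⟨v, hv⟩ := exists_eq_sub_one_mul_of_cocycle hA1 hW
  refine ⟨i, Nat.pos_of_ne_zero fun hi0 => hA1 (by rw [← hi, hi0, pow_zero]), hiq, v,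
    fun m => ⟨?_, hv m⟩⟩
  rw [pow_mul, hi, ← hpow, ZMod.natCast_zmod_val]

theorem mAut_one_mAdd_mAut_eq_gMul [NeZero q] (hg : g ^ q = 1) (i : ℕ) (v : ZMod p)
    (a b : ZMod p × ZMod q) :
    mAut p q g 1 v (a +ₘ mAut p q g (g ^ (i * a.2.val)) ((g ^ (i * a.2.val) - 1) * v) b) =
      gMul p q g (i + 1) (mAut p q g 1 v a) (mAut p q g 1 v b) := by
  simp only [mAut, mAdd, gMul, pow_val_add hg, add_one_mul, pow_add, Prod.mk.injEq, and_true]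
  ring

section BraceOnSemidirect

variable {mul : ZMod p × ZMod q → ZMod p × ZMod q → ZMod p × ZMod q}
  {inv : ZMod p × ZMod q → ZMod p × ZMod q}

local notation "Λ" => braceLambda (mAdd p q g) (mNeg p q g) mul

theorem braceKer_eq_snd_eq_zero [Fact p.Prime] [Fact q.Prime] (hpq : p ≠ q) (hg : g ^ q = 1)
    (h : IsSkewBrace (mAdd p q g) 0 (mNeg p q g) mul 0 inv)
    (hK : Nat.card (braceKer (mAdd p q g) mul) = p) :
    braceKer (mAdd p q g) mul = {a | a.2 = 0} := by
  have hsub : braceKer (mAdd p q g) mul ⊆ {a | a.2 = 0} := fun x hxK => by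
    by_contra hx
    have hdvd := dvd_card_of_snd_ne_zero hg h.zero_mem_braceKer
      (fun _ hx _ hy => h.add_mem_braceKer hx hy) (fun _ hx => h.neg_mem_braceKer hx) hxK hx
    rw [hK, Nat.prime_dvd_prime_iff_eq Fact.out Fact.out] at hdvd
    exact hpq hdvd.symm
  refine Set.eq_of_subset_of_ncard_le hsub ?_ (Set.toFinite _)
  rw [← Nat.card_coe_set_eq, ← Nat.card_coe_set_eq, card_snd_eq_zero, hK]

theorem lambda_eq_of_snd_eq [NeZero q] (hg : g ^ q = 1)
    (h : IsSkewBrace (mAdd p q g) 0 (mNeg p q g) mul 0 inv)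
    (hK : {a | a.2 = 0} ⊆ braceKer (mAdd p q g) mul) {a b : ZMod p × ZMod q} (hab : a.2 = b.2) :
    Λ a = Λ b := by
  have hG := isGroupOp_mAdd (p := p) hg
  have hk : b +ₘ mNeg p q g a ∈ braceKer (mAdd p q g) mul :=
    hK (show b.2 + -a.2 = 0 by rw [hab, add_neg_cancel])
  have hb : mul (b +ₘ mNeg p q g a) a = b := by rw [hk a, hG.1, hG.2.2.2.1, hG.2.2.1]
  funext c
  rw [← hb, h.lambda_mul, (h.mem_braceKer_iff.1 hk)]

theorem exists_lambda_eq_mAut [Fact p.Prime] [Fact q.Prime] (hpq : p ≠ q) (hg : orderOf g = q)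
    (h : IsSkewBrace (mAdd p q g) 0 (mNeg p q g) mul 0 inv)
    (hK : Nat.card (braceKer (mAdd p q g) mul) = p) :
    ∃ i, 0 < i ∧ i < q ∧ ∃ v, ∀ a,
      Λ a = mAut p q g (g ^ (i * a.2.val)) ((g ^ (i * a.2.val) - 1) * v) := by
  have hgq : g ^ q = 1 := hg ▸ pow_orderOf_eq_one g
  have hg1 := ne_one_of_orderOf_eq hg
  have hKP := braceKer_eq_snd_eq_zero hpq hgq h hK
  have hΛ (a : ZMod p × ZMod q) : Λ a = Λ (0, a.2) := lambda_eq_of_snd_eq hgq h hKP.ge rfl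
  choose A W _ hAW using fun m : ZMod q =>
    exists_eq_mAut hpq hg (h.lambda_add (0, m)) (h.lambda_injective (0, m))
  have hmul_snd (a b : ZMod p × ZMod q) : (mul a b).2 = a.2 + b.2 := by
    rw [h.mul_eq_add_lambda, hΛ, hAW]
    rfl
  have hcomp (m m' : ZMod q) : A (m + m') = A m * A m' ∧ W (m + m') = W m + A m * W m' := by
    rw [← mAut_inj (q := q) hg1, ← mAut_comp, ← hAW, ← hAW, ← hAW]
    calc Λ (0, m + m') = Λ (mul (0, m) (0, m')) := by rw [hΛ (mul _ _), hmul_snd]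
      _ = Λ (0, m) ∘ Λ (0, m') := funext (h.lambda_mul _ _)
  have hΛ0 : Λ (0, 0) = id := funext (h.mem_braceKer_iff.1 h.zero_mem_braceKer)
  have h0 : A 0 = 1 ∧ W 0 = 0 := by rw [← mAut_inj (q := q) hg1, ← hAW, hΛ0, mAut_one_zero]
  have hne : A 1 ≠ 1 ∨ W 1 ≠ 0 := by
    by_contra! h1
    have ht : ((0, 1) : ZMod p × ZMod q) ∈ braceKer (mAdd p q g) mul := by
      rw [h.mem_braceKer_iff, hAW, h1.1, h1.2, mAut_one_zero]
      exact fun _ => rfl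
    rw [hKP] at ht
    exact one_ne_zero ht
  obtain ⟨i, hi0, hiq, v, hv⟩ := exists_pow_and_coboundary hg
    (ZMod.natCast_ne_zero_of_prime Fact.out Fact.out hpq.symm) h0.1
    (fun m m' => (hcomp m m').1) (fun m m' => (hcomp m m').2) hne
  refine ⟨i, hi0, hiq, v, fun a => ?_⟩
  rw [hΛ, hAW, (hv a.2).2, (hv a.2).1]

theorem exists_equiv_gMul [Fact p.Prime] [Fact q.Prime] (hpq : p ≠ q) (hg : orderOf g = q)
    (h : IsSkewBrace (mAdd p q g) 0 (mNeg p q g) mul 0 inv)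
    (hK : Nat.card (braceKer (mAdd p q g) mul) = p) :
    ∃ γ, 1 < γ ∧ γ ≤ q ∧ ∃ φ : (ZMod p × ZMod q) ≃ (ZMod p × ZMod q),
      (∀ a b, φ (a +ₘ b) = φ a +ₘ φ b) ∧ ∀ a b, φ (mul a b) = gMul p q g γ (φ a) (φ b) := by
  have hgq : g ^ q = 1 := hg ▸ pow_orderOf_eq_one g
  obtain ⟨i, hi0, hiq, v, hΛ⟩ := exists_lambda_eq_mAut hpq hg h hK
  refine ⟨i + 1, by omega, by omega, mShear p q g v, mAut_mAdd hgq 1 v, fun a b => ?_⟩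
  rw [h.mul_eq_add_lambda, hΛ]
  exact mAut_one_mAdd_mAut_eq_gMul hgq i v a b

end BraceOnSemidirect

end Semidirect

theorem stmt18_general (p q : ℕ) (hp : p.Prime) (hq : q.Prime) (hlt : q < p)
    (g : ZMod p) (hg : orderOf g = q) :
    (∀ γ : ℕ, 1 < γ → γ ≤ q →
      IsSkewBrace (mAdd p q g) 0 (mNeg p q g) (gMul p q g γ) 0 (gInv p q g γ) ∧
      IsSkewBrace (gMul p q g γ) 0 (gInv p q g γ) (mAdd p q g) 0 (mNeg p q g) ∧
      Nat.card {a : ZMod p × ZMod q | ∀ b, gMul p q g γ a b = mAdd p q g a b} = p) ∧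
    (∀ γ γ' : ℕ, 1 < γ → γ ≤ q → 1 < γ' → γ' ≤ q → γ ≠ γ' →
      ¬∃ e : (ZMod p × ZMod q) ≃ (ZMod p × ZMod q),
        (∀ a b, e (mAdd p q g a b) = mAdd p q g (e a) (e b)) ∧
        (∀ a b, e (gMul p q g γ a b) = gMul p q g γ' (e a) (e b))) ∧
    (∀ (A : Type) (add : A → A → A) (zero : A) (neg : A → A)
        (mul : A → A → A) (one : A) (inv : A → A),
      IsSkewBrace add zero neg mul one inv →
      (∃ e : A ≃ ZMod p × ZMod q, ∀ a b, e (add a b) = mAdd p q g (e a) (e b)) →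
      Nat.card {a : A | ∀ b, mul a b = add a b} = p →
      ∃ γ : ℕ, 1 < γ ∧ γ ≤ q ∧
        ∃ e : A ≃ ZMod p × ZMod q,
          (∀ a b, e (add a b) = mAdd p q g (e a) (e b)) ∧
          (∀ a b, e (mul a b) = gMul p q g γ (e a) (e b))) := by
  have : Fact p.Prime := ⟨hp⟩
  have : Fact q.Prime := ⟨hq⟩
  have hpq : p ≠ q := hlt.ne'
  have hgq : g ^ q = 1 := hg ▸ pow_orderOf_eq_one g
  have hgγ (γ : ℕ) : (g ^ γ) ^ q = 1 := by rw [pow_right_comm, hgq, one_pow]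
  refine ⟨fun γ h1 h2 => ?_, fun γ γ' h1 h2 h1' h2' hne ⟨e, hadd, hmul⟩ => ?_,
    fun A add zero neg mul one inv h ⟨e, he⟩ hK => ?_⟩
  · have hγ : (γ : ZMod q) ≠ 1 := by
      rw [← sub_ne_zero, ← ZMod.val_ne_zero, ZMod.val_natCast_sub_one q (by omega) h2]
      omega
    refine ⟨?_, ?_, ?_⟩
    · rw [gMul_eq_mAdd, gInv_eq_mNeg]
      exact isSkewBrace_mAdd hgq (hgγ γ)
    · rw [gMul_eq_mAdd, gInv_eq_mNeg]
      exact isSkewBrace_mAdd (hgγ γ) hgq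
    · exact (congrArg (Nat.card ∘ Set.Elem) (braceKer_gMul hg hγ)).trans card_snd_eq_zero
  · exact hne (ZMod.natCast_injOn_Ioc q ⟨by omega, h2⟩ ⟨by omega, h2'⟩
      ((pow_eq_pow_iff_natCast_eq hg).1 (pow_eq_pow_of_gMul_equiv hpq hg hadd hmul)))
  · obtain ⟨γ, h1, h2, φ, hφadd, hφmul⟩ := exists_equiv_gMul hpq hg
      (h.transfer (isGroupOp_mAdd hgq) e he) ((card_braceKer_transfer e he).trans hK)
    refine ⟨γ, h1, h2, e.trans φ, fun a b => ?_, fun a b => ?_⟩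
    · simp only [Equiv.trans_apply, he, hφadd]
    · simpa using hφmul (e a) (e b)

/-- Let `p > q` be primes with `p ≡ 1 (mod q)` and `g` of order `q` mod `p`.  For each
`1 < γ ≤ q`, the operations `(n,m) + (s,t) = (n + g^m s, m+t)` and
`(n,m) ∘ (s,t) = (n + g^{γm} s, m+t)` make `A_γ = (ℤ_p × ℤ_q, +, ∘)` a bi-skew brace
with additive group `ℤ_p ⋊_g ℤ_q` and `|ker λ| = p`; distinct values of `γ` give
non-isomorphic braces, and every skew brace with additive group `ℤ_p ⋊_g ℤ_q` and
`|ker λ| = p` is isomorphic to some `A_γ`: there are exactly `q - 1` isomorphism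
classes. -/
theorem stmt18 (p q : ℕ) (hp : p.Prime) (hq : q.Prime) (hlt : q < p)
    (hmod : p % q = 1) (g : ZMod p) (hg : orderOf g = q) :
    (∀ γ : ℕ, 1 < γ → γ ≤ q →
      IsSkewBrace (mAdd p q g) 0 (mNeg p q g) (gMul p q g γ) 0 (gInv p q g γ) ∧
      IsSkewBrace (gMul p q g γ) 0 (gInv p q g γ) (mAdd p q g) 0 (mNeg p q g) ∧
      Nat.card {a : ZMod p × ZMod q | ∀ b, gMul p q g γ a b = mAdd p q g a b} = p) ∧
    (∀ γ γ' : ℕ, 1 < γ → γ ≤ q → 1 < γ' → γ' ≤ q → γ ≠ γ' →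
      ¬∃ e : (ZMod p × ZMod q) ≃ (ZMod p × ZMod q),
        (∀ a b, e (mAdd p q g a b) = mAdd p q g (e a) (e b)) ∧
        (∀ a b, e (gMul p q g γ a b) = gMul p q g γ' (e a) (e b))) ∧
    (∀ (A : Type) (add : A → A → A) (zero : A) (neg : A → A)
        (mul : A → A → A) (one : A) (inv : A → A),
      IsSkewBrace add zero neg mul one inv →
      (∃ e : A ≃ ZMod p × ZMod q, ∀ a b, e (add a b) = mAdd p q g (e a) (e b)) →
      Nat.card {a : A | ∀ b, mul a b = add a b} = p →
      ∃ γ : ℕ, 1 < γ ∧ γ ≤ q ∧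
        ∃ e : A ≃ ZMod p × ZMod q,
          (∀ a b, e (add a b) = mAdd p q g (e a) (e b)) ∧
          (∀ a b, e (mul a b) = gMul p q g γ (e a) (e b))) :=
  stmt18_general p q hp hq hlt g hg
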